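/- Exact Newton comparator case: under the hypotheses of the token-local contraction bound, if additionally there exists d* with β_t⟨d*, s_t⟩ = 1 for all t (so ε(d*) = 0) and the regret bound holds against d*, then ∏_{t=1}^T q_t ≤ (2R/T)^T. -/

import Mathlib

/-! At the exact comparator `β_t⟨d*, s_t⟩ = 1` every `h_t(d*)` equals `-1/2`, so the regret against
`d*` is exactly `∑_t q_t / 2` and hence `∑_t q_t ≤ 2R`; AM–GM turns this into the bound on `∏_t q_t`. -/

open Finset

theorem Real.prod_le_arith_mean_pow {ι : Type*} (s : Finset ι) (f : ι → ℝ)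
    (hf : ∀ i ∈ s, 0 ≤ f i) : ∏ i ∈ s, f i ≤ ((∑ i ∈ s, f i) / #s) ^ #s := by
  rcases s.eq_empty_or_nonempty with rfl | hs
  · simp
  have hcard : (0 : ℝ) < #s := by exact_mod_cast hs.card_pos
  have amgm := Real.geom_mean_le_arith_mean s (fun _ => 1) f (fun _ _ => zero_le_one)
    (by simpa using hcard) hf
  simp only [Real.rpow_one, sum_const, nsmul_eq_mul, mul_one, one_mul] at amgm
  calc ∏ i ∈ s, f i = ((∏ i ∈ s, f i) ^ (#s : ℝ)⁻¹) ^ #s := by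
        rw [← Real.rpow_natCast, ← Real.rpow_mul (prod_nonneg hf), inv_mul_cancel₀ hcard.ne',
          Real.rpow_one]
    _ ≤ ((∑ i ∈ s, f i) / #s) ^ #s := by
        gcongr
        exact Real.rpow_nonneg (prod_nonneg hf) _

theorem stmt_15_general (K T : ℕ)
    (β : Fin T → ℝ) (dseq : Fin T → Fin K → ℝ) (dstar : Fin K → ℝ)
    (s : Fin T → Fin K → ℝ)
    (hstar : ∀ t, β t * ∑ i, dstar i * s t i = 1)
    (h : Fin T → (Fin K → ℝ) → ℝ)
    (hh : ∀ t (d' : Fin K → ℝ),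
      h t d' = ((1 - β t * ∑ i, d' i * s t i) ^ 2 - 1) / 2)
    (q : Fin T → ℝ)
    (hq : ∀ t, q t = (1 - β t * ∑ i, dseq t i * s t i) ^ 2)
    (R : ℝ) (hreg : ∑ t, (h t (dseq t) - h t dstar) ≤ R) :
    ∏ t, q t ≤ (2 * R / (T : ℝ)) ^ T := by
  have hq_nonneg : ∀ t, 0 ≤ q t := fun t => hq t ▸ sq_nonneg _
  have hregret : ∀ t, h t (dseq t) - h t dstar = q t / 2 := fun t => by
    rw [hh, hh, hstar, hq]
    ring
  have hsum : ∑ t, q t ≤ 2 * R := by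
    rw [sum_congr rfl fun t _ => hregret t, ← sum_div] at hreg
    linarith
  calc ∏ t, q t ≤ ((∑ t, q t) / T) ^ T := by
        simpa using Real.prod_le_arith_mean_pow univ q fun t _ => hq_nonneg t
    _ ≤ (2 * R / T) ^ T := by
        gcongr
        exact div_nonneg (sum_nonneg fun t _ => hq_nonneg t) T.cast_nonneg

/-- Exact Newton comparator case: if moreover `β_t⟨d*, s_t⟩ = 1` for all `t`
(so `ε(d*) = 0`) and the regret bound holds against `d*`, then
`∏_t q_t ≤ (2R/T)^T`. -/
theorem stmt_15 (K T : ℕ) (hT : 0 < T)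
    (k : Fin T → Fin K → ℝ) (hk : ∀ t, ∑ i, k t i ^ 2 = 1)
    (β : Fin T → ℝ) (dseq : Fin T → Fin K → ℝ) (dstar : Fin K → ℝ)
    (s : Fin T → Fin K → ℝ) (hs : ∀ t i, s t i = k t i ^ 2)
    (hstar : ∀ t, β t * ∑ i, dstar i * s t i = 1)
    (h : Fin T → (Fin K → ℝ) → ℝ)
    (hh : ∀ t (d' : Fin K → ℝ),
      h t d' = ((1 - β t * ∑ i, d' i * s t i) ^ 2 - 1) / 2)
    (q : Fin T → ℝ)
    (hq : ∀ t, q t = (1 - β t * ∑ i, dseq t i * s t i) ^ 2)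
    (R : ℝ) (hreg : ∑ t, (h t (dseq t) - h t dstar) ≤ R) :
    ∏ t, q t ≤ (2 * R / (T : ℝ)) ^ T :=
  stmt_15_general K T β dseq dstar s hstar h hh q hq R hreg
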